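/- Lower bound for the logarithmic effective Hamiltonian: let C > 0 be any constant such that x log x ≥ 2 log x − C for all x > 0 (such C exists). If (u, m, H̄) is a classical solution of the logarithmic ergodic MFG system, then ∫_Q log m dy ≤ C + ∫_Q v(y) dy, and consequently H̄ ≥ |P|²/2 − C − 2 ∫_Q v(y) dy. -/

import Mathlib

open MeasureTheory Real

/-- Partial derivative in direction `i`. -/
noncomputable def pd {n : ℕ} (i : Fin n) (f : (Fin n → ℝ) → ℝ) (x : Fin n → ℝ) : ℝ :=
  fderiv ℝ f x (Pi.single i 1)

/-- Laplacian: sum of second partial derivatives. -/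
noncomputable def lap {n : ℕ} (f : (Fin n → ℝ) → ℝ) (x : Fin n → ℝ) : ℝ :=
  ∑ i, pd i (pd i f) x

/-- Divergence of a vector field. -/
noncomputable def dvg {n : ℕ} (F : (Fin n → ℝ) → Fin n → ℝ) (x : Fin n → ℝ) : ℝ :=
  ∑ i, pd i (fun y => F y i) x

/-- `ℤⁿ`-periodicity. -/
def ZPeriodic {n : ℕ} (f : (Fin n → ℝ) → ℝ) : Prop :=
  ∀ (k : Fin n → ℤ) (x : Fin n → ℝ), f (x + fun i => (k i : ℝ)) = f x

/-- The unit cube `Q = [0,1]ⁿ`. -/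
def unitCube (n : ℕ) : Set (Fin n → ℝ) := Set.Icc 0 1

section helpers
variable {n : ℕ}

lemma contDiff_pd_of (i : Fin n) {f : (Fin n → ℝ) → ℝ} {k : ℕ} (hf : ContDiff ℝ (k+1) f) :
    ContDiff ℝ k (pd i f) := by
  have h1 : ContDiff ℝ k (fderiv ℝ f) := hf.fderiv_right (by norm_cast)
  exact (ContinuousLinearMap.apply ℝ ℝ (Pi.single i 1)).contDiff.comp h1

lemma continuous_pd (i : Fin n) {f : (Fin n → ℝ) → ℝ} (hf : ContDiff ℝ 1 f) :
    Continuous (pd i f) := by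
  have : ContDiff ℝ (0+1 : ℕ) f := by exact_mod_cast hf
  simpa using (contDiff_pd_of i this).continuous

lemma contDiff_one_pd (i : Fin n) {f : (Fin n → ℝ) → ℝ} (hf : ContDiff ℝ 2 f) :
    ContDiff ℝ 1 (pd i f) := by
  have : ContDiff ℝ (1+1 : ℕ) f := by exact_mod_cast hf
  exact_mod_cast contDiff_pd_of i this

lemma continuous_lap {f : (Fin n → ℝ) → ℝ} (hf : ContDiff ℝ 2 f) : Continuous (lap f) := by
  unfold lap
  exact continuous_finset_sum _ fun i _ => continuous_pd i (contDiff_one_pd i hf)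

lemma ZPeriodic.pd_per {f : (Fin n → ℝ) → ℝ} (hp : ZPeriodic f) (hd : Differentiable ℝ f)
    (i : Fin n) : ZPeriodic (pd i f) := by
  intro k x
  set c : Fin n → ℝ := fun i => (k i : ℝ)
  have h1 : HasFDerivAt f (fderiv ℝ f (x + c)) (x + c) := (hd _).hasFDerivAt
  have h2 : HasFDerivAt (fun y : Fin n → ℝ => f (y + c)) (fderiv ℝ f (x + c)) x := by
    simpa [Function.comp_def] using h1.comp x ((hasFDerivAt_id x).add_const c)
  have h3 : (fun y : Fin n → ℝ => f (y + c)) = f := funext fun y => hp k y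
  rw [h3] at h2
  show fderiv ℝ f (x + c) (Pi.single i 1) = fderiv ℝ f x (Pi.single i 1)
  rw [h2.fderiv]

lemma pd_mul {f g : (Fin n → ℝ) → ℝ} {x : Fin n → ℝ} (hf : DifferentiableAt ℝ f x)
    (hg : DifferentiableAt ℝ g x) (i : Fin n) :
    pd i (fun y => f y * g y) x = pd i f x * g x + f x * pd i g x := by
  show fderiv ℝ (fun y => f y * g y) x (Pi.single i 1) = _
  rw [fderiv_fun_mul hf hg]
  simp [pd]; ring

lemma pd_sub {f g : (Fin n → ℝ) → ℝ} {x : Fin n → ℝ} (hf : DifferentiableAt ℝ f x)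
    (hg : DifferentiableAt ℝ g x) (i : Fin n) :
    pd i (fun y => f y - g y) x = pd i f x - pd i g x := by
  show fderiv ℝ (fun y => f y - g y) x (Pi.single i 1) = _
  rw [fderiv_fun_sub hf hg]; rfl

lemma pd_add_const {f : (Fin n → ℝ) → ℝ} {x : Fin n → ℝ} (hf : DifferentiableAt ℝ f x)
    (c : ℝ) (i : Fin n) :
    pd i (fun y => f y + c) x = pd i f x := by
  show fderiv ℝ (fun y => f y + c) x (Pi.single i 1) = _
  rw [fderiv_add_const]; rfl

end helpers

lemma insertNth_one_eq {n : ℕ} (i : Fin (n+1)) (x : Fin n → ℝ) :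
    (i.insertNth 1 x : Fin (n+1) → ℝ)
      = i.insertNth 0 x + fun j => (((Pi.single i 1 : Fin (n+1) → ℤ) j : ℝ)) := by
  funext j
  refine Fin.succAboveCases i ?_ ?_ j
  · simp
  · intro j
    simp [Fin.succAbove_ne i j, Pi.single_apply, (Fin.succAbove_ne i j)]

lemma integral_dvg_zero {n : ℕ} (F : (Fin (n+1) → ℝ) → Fin (n+1) → ℝ)
    (hF : ∀ i, ContDiff ℝ 1 (fun x => F x i))
    (hFp : ∀ i, ZPeriodic fun x => F x i) :
    ∫ x in unitCube (n+1), dvg F x = 0 := by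
  have hle : (0 : Fin (n+1) → ℝ) ≤ 1 := fun i => zero_le_one
  have key := integral_divergence_of_hasFDerivAt_off_countable' (0 : Fin (n+1) → ℝ) 1 hle
    (fun i x => F x i) (fun i x => fderiv ℝ (fun y => F y i) x) ∅ Set.countable_empty
    (fun i => ((hF i).continuous).continuousOn)
    (fun x _ i => ((hF i).differentiable one_ne_zero x).hasFDerivAt)
    (by
      apply Continuous.integrableOn_Icc
      exact continuous_finset_sum _ fun i _ => continuous_pd i (hF i))
  have hz : ∀ i : Fin (n+1),
      (∫ x in Set.Icc ((0 : Fin (n+1) → ℝ) ∘ i.succAbove) ((1 : Fin (n+1) → ℝ) ∘ i.succAbove),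
        F (i.insertNth ((1 : Fin (n+1) → ℝ) i) x) i)
      - ∫ x in Set.Icc ((0 : Fin (n+1) → ℝ) ∘ i.succAbove) ((1 : Fin (n+1) → ℝ) ∘ i.succAbove),
        F (i.insertNth ((0 : Fin (n+1) → ℝ) i) x) i = 0 := by
    intro i
    have : ∀ x : Fin n → ℝ, F (i.insertNth (1:ℝ) x) i = F (i.insertNth (0:ℝ) x) i := by
      intro x
      rw [insertNth_one_eq i x]
      exact hFp i (Pi.single i 1) (i.insertNth 0 x)
    simp only [Pi.one_apply, Pi.zero_apply, this, sub_self]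
  rw [Finset.sum_congr rfl (fun i _ => hz i), Finset.sum_const_zero] at key
  exact key

lemma pd_const {n : ℕ} (i : Fin n) (c : ℝ) (x : Fin n → ℝ) :
    pd i (fun _ => c) x = 0 := by
  show fderiv ℝ (fun _ => c) x (Pi.single i 1) = 0
  rw [fderiv_fun_const]; rfl

lemma integral_pd_zero {n : ℕ} (i : Fin (n+1)) (f : (Fin (n+1) → ℝ) → ℝ)
    (hf : ContDiff ℝ 1 f) (hp : ZPeriodic f) :
    ∫ x in unitCube (n+1), pd i f x = 0 := by
  set F : (Fin (n+1) → ℝ) → Fin (n+1) → ℝ := fun x j => if j = i then f x else 0 with hFdef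
  have hcomp : ∀ j, (fun x => F x j) = if j = i then f else (fun _ => 0) := by
    intro j; by_cases hj : j = i <;> simp [hFdef, hj]
  have hdvg : ∀ x, dvg F x = pd i f x := by
    intro x
    show (∑ j, pd j (fun y => F y j) x) = pd i f x
    rw [Finset.sum_eq_single_of_mem i (Finset.mem_univ i)]
    · rw [show (fun y => F y i) = f by rw [hcomp i]; simp]
    · intro j _ hj
      rw [show (fun y => F y j) = (fun _ => (0:ℝ)) by rw [hcomp j]; simp [hj]]
      exact pd_const j 0 x
  have := integral_dvg_zero F (fun j => by
      rw [hcomp j]; by_cases hj : j = i <;> simp [hj] <;> [exact hf; exact contDiff_const])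
    (fun j k x => by by_cases hj : j = i <;> simp [hFdef, hj, hp k x])
  rw [← this]
  exact integral_congr_ae (Filter.Eventually.of_forall fun x => (hdvg x).symm)

lemma ZPeriodic.mul {n : ℕ} {f g : (Fin n → ℝ) → ℝ} (hf : ZPeriodic f) (hg : ZPeriodic g) :
    ZPeriodic (fun x => f x * g x) := fun k x => by simp [hf k x, hg k x]

lemma ZPeriodic.sub' {n : ℕ} {f g : (Fin n → ℝ) → ℝ} (hf : ZPeriodic f) (hg : ZPeriodic g) :
    ZPeriodic (fun x => f x - g x) := fun k x => by simp [hf k x, hg k x]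

lemma ZPeriodic.add_const {n : ℕ} {f : (Fin n → ℝ) → ℝ} (hf : ZPeriodic f) (c : ℝ) :
    ZPeriodic (fun x => f x + c) := fun k x => by simp [hf k x]

lemma integral_green {n : ℕ} {f g : (Fin (n+1) → ℝ) → ℝ}
    (hf : ContDiff ℝ 2 f) (hg : ContDiff ℝ 2 g)
    (hfp : ZPeriodic f) (hgp : ZPeriodic g) :
    ∫ x in unitCube (n+1), (f x * lap g x - g x * lap f x) = 0 := by
  have h12 : (1:WithTop ℕ∞) ≤ 2 := by norm_num
  set F : (Fin (n+1) → ℝ) → Fin (n+1) → ℝ :=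
    fun x j => f x * pd j g x - g x * pd j f x with hFdef
  have hdvg : ∀ x, dvg F x = f x * lap g x - g x * lap f x := by
    intro x
    show (∑ j, pd j (fun y => F y j) x) = _
    have : ∀ j : Fin (n+1), pd j (fun y => F y j) x
        = f x * pd j (pd j g) x - g x * pd j (pd j f) x := by
      intro j
      have dff := (hf.differentiable (by norm_num)) x
      have dgg := (hg.differentiable (by norm_num)) x
      have dpf := ((contDiff_one_pd j hf).differentiable one_ne_zero) x
      have dpg := ((contDiff_one_pd j hg).differentiable one_ne_zero) x
      rw [show (fun y => F y j) = (fun y => f y * pd j g y - g y * pd j f y) from rfl,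
        pd_sub (f := fun y => f y * pd j g y) (g := fun y => g y * pd j f y) (dff.mul dpg) (dgg.mul dpf) j, pd_mul dff dpg j, pd_mul dgg dpf j]
      ring
    rw [Finset.sum_congr rfl (fun j _ => this j), lap, lap, Finset.mul_sum, Finset.mul_sum,
      ← Finset.sum_sub_distrib]
  have key := integral_dvg_zero F
    (fun j => ((hf.of_le h12).mul (contDiff_one_pd j hg)).sub
      ((hg.of_le h12).mul (contDiff_one_pd j hf)))
    (fun j => (hfp.mul (hgp.pd_per (hg.differentiable (by norm_num)) j)).sub'
      (hgp.mul (hfp.pd_per (hf.differentiable (by norm_num)) j)))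
  rw [← key]
  exact integral_congr_ae (Filter.Eventually.of_forall fun x => (hdvg x).symm)

lemma integral_aux4 {n : ℕ} {u m : (Fin (n+1) → ℝ) → ℝ} (P : Fin (n+1) → ℝ)
    (hu : ContDiff ℝ 2 u) (hm : ContDiff ℝ 2 m)
    (hup : ZPeriodic u) (hmp : ZPeriodic m) :
    ∫ x in unitCube (n+1),
      ((∑ j, pd j u x * (m x * (pd j u x + P j)))
        + u x * dvg (fun y j => m y * (pd j u y + P j)) x) = 0 := by
  have h12 : (1:WithTop ℕ∞) ≤ 2 := by norm_num
  set F : (Fin (n+1) → ℝ) → Fin (n+1) → ℝ :=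
    fun x j => u x * (m x * (pd j u x + P j)) with hFdef
  have hcomp : ∀ j, ContDiff ℝ 1 (fun y => m y * (pd j u y + P j)) :=
    fun j => (hm.of_le h12).mul ((contDiff_one_pd j hu).add contDiff_const)
  have hdvg : ∀ x, dvg F x
      = (∑ j, pd j u x * (m x * (pd j u x + P j)))
        + u x * dvg (fun y j => m y * (pd j u y + P j)) x := by
    intro x
    show (∑ j, pd j (fun y => F y j) x) = _
    have : ∀ j : Fin (n+1), pd j (fun y => F y j) x
        = pd j u x * (m x * (pd j u x + P j))
          + u x * pd j (fun y => m y * (pd j u y + P j)) x := by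
      intro j
      exact pd_mul ((hu.differentiable (by norm_num)) x) (((hcomp j).differentiable one_ne_zero) x) j
    rw [Finset.sum_congr rfl (fun j _ => this j), Finset.sum_add_distrib, ← Finset.mul_sum]
    rfl
  have key := integral_dvg_zero F
    (fun j => (hu.of_le h12).mul (hcomp j))
    (fun j => hup.mul (hmp.mul ((hup.pd_per (hu.differentiable (by norm_num)) j).add_const (P j))))
  rw [← key]
  exact integral_congr_ae (Filter.Eventually.of_forall fun x => (hdvg x).symm)


/-- A classical solution `(u, m, H)` of the logarithmic ergodic MFG system
`-Δu + ½|∇u+P|² - v - log m = H`, `-Δm - div(m(∇u+P)) = 0`, `∫ u = 0`, `∫ m = 1`. -/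
structure LogMFG {n : ℕ} (v : (Fin n → ℝ) → ℝ) (P : Fin n → ℝ)
    (u m : (Fin n → ℝ) → ℝ) (H : ℝ) : Prop where
  hu : ContDiff ℝ 2 u
  hm : ContDiff ℝ 2 m
  hup : ZPeriodic u
  hmp : ZPeriodic m
  hmpos : ∀ x, 0 < m x
  hHJB : ∀ x, -lap u x + (∑ i, (pd i u x + P i) ^ 2) / 2 - v x - Real.log (m x) = H
  hFP : ∀ x, -lap m x - dvg (fun y j => m y * (pd j u y + P j)) x = 0
  humean : (∫ y in unitCube n, u y) = 0
  hmmean : (∫ y in unitCube n, m y) = 1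

/-- Lower bound for the logarithmic effective Hamiltonian. -/
theorem log_mfg_H_lower_bound {n : ℕ} (hn : 1 ≤ n)
    (v : (Fin n → ℝ) → ℝ) (hv0 : ∀ x, 0 ≤ v x) (hvlip : ∃ K, LipschitzWith K v) (hvper : ZPeriodic v)
    (P : Fin n → ℝ)
    (C : ℝ) (hC : 0 < C) (hClog : ∀ x : ℝ, 0 < x → 2 * Real.log x - C ≤ x * Real.log x)
    (u m : (Fin n → ℝ) → ℝ) (H : ℝ)
    (h : LogMFG v P u m H) :
    (∫ y in unitCube n, Real.log (m y)) ≤ C + ∫ y in unitCube n, v y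
    ∧ (∑ i, (P i) ^ 2) / 2 - C - 2 * ∫ y in unitCube n, v y ≤ H := by
  obtain ⟨n', rfl⟩ : ∃ n', n = n' + 1 := ⟨n - 1, (Nat.succ_pred_eq_of_pos hn).symm⟩
  set Q : Set (Fin (n'+1) → ℝ) := unitCube (n'+1) with hQdef
  have hQm : MeasurableSet Q := measurableSet_Icc
  have hvol : volume Q = 1 := by
    simp [hQdef, unitCube, Real.volume_Icc_pi]
  have hvolr : (volume Q).toReal = 1 := by rw [hvol]; simp
  have hvlt : volume Q < ⊤ := by rw [hvol]; exact ENNReal.one_lt_top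
  have h12 : (1 : WithTop ℕ∞) ≤ 2 := by norm_num
  have hu := h.hu
  have hm := h.hm
  -- continuity facts
  obtain ⟨K, hK⟩ := hvlip
  have hcv : Continuous v := hK.continuous
  have hcu : Continuous u := hu.continuous
  have hcm : Continuous m := hm.continuous
  have hclog : Continuous (fun x => Real.log (m x)) := by
    rw [continuous_iff_continuousAt]
    exact fun x => (Real.continuousAt_log (h.hmpos x).ne').comp hcm.continuousAt
  have hcpdu : ∀ i, Continuous (pd i u) := fun i => continuous_pd i (hu.of_le h12)
  have hclapu : Continuous (lap u) := continuous_lap hu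
  have hclapm : Continuous (lap m) := continuous_lap hm
  set g : Fin (n'+1) → (Fin (n'+1) → ℝ) → ℝ := fun i x => pd i u x + P i with hgdef
  have hcg : ∀ i, Continuous (g i) := fun i => (hcpdu i).add continuous_const
  set S : (Fin (n'+1) → ℝ) → ℝ := fun x => ∑ i, (g i x) ^ 2 with hSdef
  have hcS : Continuous S := continuous_finset_sum _ fun i _ => ((hcg i).pow 2)
  set G : (Fin (n'+1) → ℝ) → Fin (n'+1) → ℝ := fun y j => m y * (pd j u y + P j) with hGdef
  have hdvgG : ∀ x, dvg G x = -lap m x := fun x => by linarith [h.hFP x]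
  have hcdvgG : Continuous (fun x => dvg G x) := by
    rw [show (fun x => dvg G x) = fun x => -lap m x from funext hdvgG]
    exact hclapm.neg
  set A : (Fin (n'+1) → ℝ) → ℝ := fun x => ∑ j, pd j u x * (m x * g j x) with hAdef
  have hcA : Continuous A := continuous_finset_sum _ fun j _ =>
    (hcpdu j).mul (hcm.mul (hcg j))
  -- integrability helper
  have intgr : ∀ {f : (Fin (n'+1) → ℝ) → ℝ}, Continuous f → IntegrableOn f Q :=
    fun hf => hf.integrableOn_Icc
  have intc : ∀ c : ℝ, IntegrableOn (fun _ => c) Q :=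
    fun c => integrableOn_const hvlt.ne
  -- basic zero-average facts
  have F1 : ∫ x in Q, lap u x = 0 := by
    have key := integral_dvg_zero (fun x j => pd j u x)
      (fun j => contDiff_one_pd j hu) (fun j => h.hup.pd_per (hu.differentiable (by norm_num)) j)
    rw [← key]
    exact integral_congr_ae (Filter.Eventually.of_forall fun x => rfl)
  have F2 : ∀ i, ∫ x in Q, pd i u x = 0 :=
    fun i => integral_pd_zero i u (hu.of_le h12) h.hup
  -- Jensen : P i ^ 2 ≤ ∫ g i ^ 2
  have F3 : ∀ i, P i ^ 2 ≤ ∫ x in Q, (g i x) ^ 2 := by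
    intro i
    have int_g : IntegrableOn (g i) Q := intgr (hcg i)
    have int_g2 : IntegrableOn (fun x => g i x ^ 2) Q := intgr ((hcg i).pow 2)
    have int_cg : IntegrableOn (fun x => 2 * P i * g i x) Q := int_g.const_mul _
    have int_sub : IntegrableOn (fun x => g i x ^ 2 - 2 * P i * g i x) Q := int_g2.sub int_cg
    have hmean : ∫ x in Q, g i x = P i := by
      have int_pd : IntegrableOn (fun x => pd i u x) Q := intgr (hcpdu i)
      rw [show (∫ x in Q, g i x) = ∫ x in Q, (pd i u x + P i) from rfl,
        integral_add int_pd (intc (P i)), F2 i, setIntegral_const, measureReal_def, hvolr]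
      simp
    have hsq : 0 ≤ ∫ x in Q, (g i x - P i) ^ 2 :=
      setIntegral_nonneg hQm fun x _ => sq_nonneg _
    have hexp : ∫ x in Q, (g i x - P i) ^ 2
        = (∫ x in Q, (g i x) ^ 2) - P i ^ 2 := by
      rw [integral_congr_ae (Filter.Eventually.of_forall
        (fun x => by ring :
          ∀ x, (g i x - P i) ^ 2 = g i x ^ 2 - 2 * P i * g i x + P i ^ 2)),
        integral_add int_sub (intc (P i ^ 2)), integral_sub int_g2 int_cg,
        integral_const_mul, hmean, setIntegral_const, measureReal_def, hvolr]
      simp; ring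
    linarith [hexp ▸ hsq]
  -- integrate HJB over Q
  have E1 : (∫ x in Q, S x) / 2 - (∫ x in Q, v x) - (∫ x in Q, Real.log (m x)) = H := by
    have int_nlap : IntegrableOn (fun x => -lap u x) Q := (intgr hclapu).neg
    have int_S2 : IntegrableOn (fun x => S x / 2) Q := (intgr hcS).div_const 2
    have int_a : IntegrableOn (fun x => -lap u x + S x / 2) Q := int_nlap.add int_S2
    have int_b : IntegrableOn (fun x => -lap u x + S x / 2 - v x) Q := int_a.sub (intgr hcv)
    have h0 : ∫ x in Q, (-lap u x + S x / 2 - v x - Real.log (m x))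
        = ∫ x in Q, (fun _ : Fin (n'+1) → ℝ => H) x :=
      integral_congr_ae (Filter.Eventually.of_forall fun x => h.hHJB x)
    rw [setIntegral_const, measureReal_def, hvolr, one_smul] at h0
    rw [integral_sub int_b (intgr hclog), integral_sub int_a (intgr hcv),
      integral_add int_nlap int_S2, integral_neg, F1, integral_div] at h0
    linarith [h0]
  -- Green identity + FP : ∫ m lap u = ∫ A
  have F5 : ∫ x in Q, m x * lap u x = ∫ x in Q, A x := by
    have int_ulapm : IntegrableOn (fun x => u x * lap m x) Q := intgr (hcu.mul hclapm)
    have int_mlapu : IntegrableOn (fun x => m x * lap u x) Q := intgr (hcm.mul hclapu)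
    have hgreen := integral_green hu hm h.hup h.hmp
    rw [integral_sub int_ulapm int_mlapu] at hgreen
    have haux := integral_aux4 P hu hm h.hup h.hmp
    have haux' : (∫ x in Q, A x) + ∫ x in Q, u x * dvg G x = 0 := by
      rw [← integral_add (intgr hcA) (intgr (f := fun x => u x * dvg G x) (hcu.mul hcdvgG))]
      exact haux
    have hswap : ∫ x in Q, u x * dvg G x = - ∫ x in Q, u x * lap m x := by
      rw [← integral_neg]
      refine integral_congr_ae (Filter.Eventually.of_forall fun x => ?_)
      show u x * dvg G x = -(u x * lap m x)
      rw [hdvgG x]; ring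
    rw [hswap] at haux'
    linarith [haux', hgreen]
  -- multiply HJB by m and integrate
  have E3 : (∫ x in Q, (m x * S x / 2 - A x)) - (∫ x in Q, m x * v x)
      - (∫ x in Q, m x * Real.log (m x)) = H := by
    have int_nml : IntegrableOn (fun x => -(m x * lap u x)) Q := (intgr (hcm.mul hclapu)).neg
    have int_mS2 : IntegrableOn (fun x => m x * S x / 2) Q := (intgr (hcm.mul hcS)).div_const 2
    have int_a : IntegrableOn (fun x => -(m x * lap u x) + m x * S x / 2) Q :=
      int_nml.add int_mS2
    have int_b : IntegrableOn (fun x => -(m x * lap u x) + m x * S x / 2 - m x * v x) Q :=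
      int_a.sub (intgr (hcm.mul hcv))
    have h0 : ∫ x in Q, (-(m x * lap u x) + m x * S x / 2 - m x * v x
          - m x * Real.log (m x))
        = ∫ x in Q, m x * H := by
      refine integral_congr_ae (Filter.Eventually.of_forall fun x => ?_)
      have hx := h.hHJB x
      have hSx : S x = ∑ i, (pd i u x + P i) ^ 2 := rfl
      show -(m x * lap u x) + m x * S x / 2 - m x * v x - m x * Real.log (m x) = m x * H
      rw [hSx, ← hx]; ring
    rw [integral_mul_const, h.hmmean, one_mul] at h0
    rw [integral_sub int_b (intgr (f := fun x => m x * Real.log (m x)) (hcm.mul hclog)), integral_sub int_a (intgr (f := fun x => m x * v x) (hcm.mul hcv)),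
      integral_add int_nml int_mS2, integral_neg, F5] at h0
    have hmerge : (∫ x in Q, m x * S x / 2) - (∫ x in Q, A x)
        = ∫ x in Q, (m x * S x / 2 - A x) :=
      (integral_sub int_mS2 (intgr hcA)).symm
    linarith [h0, hmerge]
  -- pointwise kinetic bound
  have E6 : (∫ x in Q, (m x * S x / 2 - A x)) ≤ (∑ j, P j ^ 2) / 2 := by
    have hpt : ∀ x, m x * S x / 2 - A x ≤ m x * ((∑ j, P j ^ 2) / 2) := by
      intro x
      have e1 : m x * S x / 2 - A x = ∑ j, m x * (P j ^ 2 - (pd j u x) ^ 2) / 2 := by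
        simp only [hSdef, hAdef, hgdef, Finset.mul_sum, Finset.sum_div,
          ← Finset.sum_sub_distrib]
        exact Finset.sum_congr rfl fun j _ => by ring
      have e2 : m x * ((∑ j, P j ^ 2) / 2) = ∑ j, m x * P j ^ 2 / 2 := by
        rw [← mul_div_assoc, Finset.mul_sum, Finset.sum_div]
      rw [e1, e2]
      refine Finset.sum_le_sum fun j _ => ?_
      nlinarith [sq_nonneg (pd j u x), (h.hmpos x).le,
        mul_nonneg (h.hmpos x).le (sq_nonneg (pd j u x))]
    calc (∫ x in Q, (m x * S x / 2 - A x))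
        ≤ ∫ x in Q, m x * ((∑ j, P j ^ 2) / 2) := by
          refine setIntegral_mono_on ?_ ?_ hQm fun x _ => hpt x
          · exact ((intgr (hcm.mul hcS)).div_const 2).sub (intgr hcA)
          · exact (intgr hcm).mul_const _
      _ = (∑ j, P j ^ 2) / 2 := by rw [integral_mul_const, h.hmmean, one_mul]
  -- entropy bound
  have E7 : 2 * (∫ x in Q, Real.log (m x)) - C ≤ ∫ x in Q, m x * Real.log (m x) := by
    have int_2log : IntegrableOn (fun x => 2 * Real.log (m x)) Q := (intgr hclog).const_mul 2
    have hmono := setIntegral_mono_on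
      (f := fun x => 2 * Real.log (m x) - C) (g := fun x => m x * Real.log (m x))
      (int_2log.sub (intc C)) (intgr (hcm.mul hclog)) hQm
      (fun x _ => hClog (m x) (h.hmpos x))
    rw [integral_sub int_2log (intc C), integral_const_mul, setIntegral_const, measureReal_def, hvolr,
      one_smul] at hmono
    linarith [hmono]
  have E8 : 0 ≤ ∫ x in Q, m x * v x :=
    setIntegral_nonneg hQm fun x _ => mul_nonneg (h.hmpos x).le (hv0 x)
  -- sum of Jensen
  have E9 : (∑ j, P j ^ 2) ≤ ∫ x in Q, S x := by
    rw [hSdef, integral_finset_sum _ (fun i _ => intgr (f := fun x => g i x ^ 2) ((hcg i).pow 2))]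
    exact Finset.sum_le_sum fun i _ => F3 i
  constructor
  · linarith [E1, E3, E6, E7, E8, E9]
  · linarith [E1, E3, E6, E7, E8, E9]
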